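/- arXiv:1411.2636 — 9 statements merged into one kernel-verified Lean document; each statement's English description precedes it below -/
import Mathlib

section
/- For any joint distribution of two binary random variables Y0, Y1 with P(Y1=1) > 0, the conditional probability P(Y0=0 | Y1=1) satisfies P(Y0=0 | Y1=1) ≥ 1 - P(Y0=1)/P(Y1=1). -/
open MeasureTheory

theorem pc_lower_bound {Ω : Type*} [MeasurableSpace Ω] (P : Measure Ω)
    [IsProbabilityMeasure P] (Y0 Y1 : Ω → Bool)
    (hY0 : Measurable Y0) (hY1 : Measurable Y1)
    (hpos : 0 < (P {ω | Y1 ω = true}).toReal) :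
    (P ({ω | Y0 ω = false} ∩ {ω | Y1 ω = true})).toReal / (P {ω | Y1 ω = true}).toReal
      ≥ 1 - (P {ω | Y0 ω = true}).toReal / (P {ω | Y1 ω = true}).toReal := by
  have hsub : {ω | Y1 ω = true} ⊆
      ({ω | Y0 ω = false} ∩ {ω | Y1 ω = true}) ∪ {ω | Y0 ω = true} := by
    intro ω hω
    by_cases h : Y0 ω = true
    · exact Or.inr h
    · exact Or.inl ⟨by simpa using h, hω⟩
  have hle : P {ω | Y1 ω = true} ≤
      P ({ω | Y0 ω = false} ∩ {ω | Y1 ω = true}) + P {ω | Y0 ω = true} :=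
    (measure_mono hsub).trans (measure_union_le _ _)
  have h1 : P ({ω | Y0 ω = false} ∩ {ω | Y1 ω = true}) ≠ ⊤ := measure_ne_top _ _
  have h2 : P {ω | Y0 ω = true} ≠ ⊤ := measure_ne_top _ _
  have hR : (P {ω | Y1 ω = true}).toReal ≤
      (P ({ω | Y0 ω = false} ∩ {ω | Y1 ω = true})).toReal + (P {ω | Y0 ω = true}).toReal := by
    rw [← ENNReal.toReal_add h1 h2]
    exact ENNReal.toReal_mono (by finiteness) hle
  rw [ge_iff_le, sub_le_iff_le_add, ← add_div, one_le_div hpos]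
  linarith
end

section
/- If P(Y1=1) > 2·P(Y0=1) (i.e. the risk ratio RR > 2), then P(Y0=0 | Y1=1) > 1/2. -/
open MeasureTheory

/- Removing `t` from `s` loses at most `μ t` of mass, so `μ (s \ t) ≥ μ s - μ t > μ s / 2` once
`2 μ t < μ s`; the event `{Y0 = 0, Y1 = 1}` is `{Y1 = 1} \ {Y0 = 1}`. -/

theorem half_lt_measureReal_sdiff_div {α : Type*} [MeasurableSpace α] {μ : Measure α}
    {s t : Set α} (h : 2 * μ.real t < μ.real s) (ht : μ t ≠ ⊤ := by finiteness) :
    1 / 2 < μ.real (s \ t) / μ.real s := by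
  have hs : 0 < μ.real s := by linarith [measureReal_nonneg (μ := μ) (s := t)]
  rw [div_lt_div_iff₀ two_pos hs]
  linarith [le_measureReal_sdiff (s₁ := s) ht]

theorem pc_balance_of_probabilities_general {Ω : Type*} [MeasurableSpace Ω] (P : Measure Ω)
    [IsProbabilityMeasure P] (Y0 Y1 : Ω → Bool)
    (hRR : (P {ω | Y1 ω = true}).toReal > 2 * (P {ω | Y0 ω = true}).toReal) :
    (P ({ω | Y0 ω = false} ∩ {ω | Y1 ω = true})).toReal / (P {ω | Y1 ω = true}).toReal
      > 1 / 2 := by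
  have hcause :
      {ω | Y0 ω = false} ∩ {ω | Y1 ω = true} = {ω | Y1 ω = true} \ {ω | Y0 ω = true} := by
    ext ω
    simp [and_comm]
  rw [hcause]
  exact half_lt_measureReal_sdiff_div hRR

theorem pc_balance_of_probabilities {Ω : Type*} [MeasurableSpace Ω] (P : Measure Ω)
    [IsProbabilityMeasure P] (Y0 Y1 : Ω → Bool)
    (hY0 : Measurable Y0) (hY1 : Measurable Y1)
    (hpos1 : 0 < (P {ω | Y1 ω = true}).toReal)
    (hpos0 : 0 < (P {ω | Y0 ω = true}).toReal)
    (hRR : (P {ω | Y1 ω = true}).toReal > 2 * (P {ω | Y0 ω = true}).toReal) :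
    (P ({ω | Y0 ω = false} ∩ {ω | Y1 ω = true})).toReal / (P {ω | Y1 ω = true}).toReal
      > 1 / 2 :=
  pc_balance_of_probabilities_general P Y0 Y1 hRR
end

section
/- Let S be a discrete random variable and Y0, Y1 binary random variables with P(Y1=1) > 0. Define Δ = Σ_s P(S=s)·max(0, P(Y1=1|S=s) - P(Y0=1|S=s)). Then P(Y0=0, Y1=1) ≥ Δ, and hence P(Y0=0 | Y1=1) ≥ Δ / P(Y1=1). -/
/-!
Within each stratum `S = s`, the event `{Y1 = true}` is covered by `{Y0 = true}` and
`{Y0 = false, Y1 = true}`, so `P(Y0 = 0, Y1 = 1, S = s) ≥ max 0 (P(Y1 = 1, S = s) - P(Y0 = 1, S = s))`.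
Summing over the strata, which partition the sample space, gives the bound on `P(Y0 = 0, Y1 = 1)`;
dividing by `P(Y1 = 1)` gives the conditional one.
-/

open MeasureTheory

namespace MeasureTheory

variable {Ω σ : Type*} [MeasurableSpace Ω] {μ : Measure Ω}
  [Fintype σ] [MeasurableSpace σ] [MeasurableSingletonClass σ] {S : Ω → σ}

theorem measure_eq_sum_inter_fiber (hS : Measurable S) (A : Set Ω) :
    μ A = ∑ s, μ (A ∩ {ω | S ω = s}) := by
  have hfiber : ∀ s, MeasurableSet {ω | S ω = s} := fun s => hS (measurableSet_singleton s)
  have hdisj : Pairwise (Function.onFun Disjoint fun s => {ω | S ω = s}) :=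
    fun s t hst => Set.disjoint_left.mpr fun ω hs ht => hst (hs.symm.trans ht)
  calc μ A = μ.restrict (⋃ s, {ω | S ω = s}) A := by
        rw [Set.iUnion_eq_univ_iff.mpr fun ω => ⟨S ω, rfl⟩, Measure.restrict_univ]
    _ = ∑ s, μ (A ∩ {ω | S ω = s}) := by
        rw [Measure.restrict_iUnion hdisj hfiber, Measure.sum_apply_of_countable, tsum_fintype]
        simp only [Measure.restrict_apply' (hfiber _)]

theorem measureReal_eq_sum_inter_fiber [IsFiniteMeasure μ] (hS : Measurable S) (A : Set Ω) :
    μ.real A = ∑ s, μ.real (A ∩ {ω | S ω = s}) := by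
  rw [measureReal_def, measure_eq_sum_inter_fiber hS A,
    ENNReal.toReal_sum fun s _ => measure_ne_top μ _]
  rfl

end MeasureTheory

theorem mul_max_zero_div_sub_div_le {p : ℝ} (hp : 0 ≤ p) (a b : ℝ) :
    p * max 0 (a / p - b / p) ≤ max 0 (a - b) := by
  rcases hp.eq_or_lt with rfl | hp
  · simp
  · rw [mul_max_of_nonneg _ _ hp.le, mul_zero, mul_sub, mul_div_cancel₀ _ hp.ne',
      mul_div_cancel₀ _ hp.ne']

theorem max_zero_measureReal_sub_le {Ω : Type*} [MeasurableSpace Ω] (μ : Measure Ω)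
    [IsFiniteMeasure μ] (A B : Set Ω) :
    max 0 (μ.real B - μ.real A) ≤ μ.real (B \ A) :=
  max_le measureReal_nonneg le_measureReal_sdiff

theorem covariate_lower_bound_general {Ω : Type*} [MeasurableSpace Ω] (P : Measure Ω)
    [IsProbabilityMeasure P] {σ : Type*} [Fintype σ] [MeasurableSpace σ]
    [MeasurableSingletonClass σ]
    (S : Ω → σ) (Y0 Y1 : Ω → Bool)
    (hS : Measurable S) :
    (P ({ω | Y0 ω = false} ∩ {ω | Y1 ω = true})).toReal ≥
        (∑ s : σ, (P {ω | S ω = s}).toReal *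
          max 0 ((P ({ω | Y1 ω = true} ∩ {ω | S ω = s})).toReal / (P {ω | S ω = s}).toReal
            - (P ({ω | Y0 ω = true} ∩ {ω | S ω = s})).toReal / (P {ω | S ω = s}).toReal)) ∧
      (P ({ω | Y0 ω = false} ∩ {ω | Y1 ω = true})).toReal / (P {ω | Y1 ω = true}).toReal ≥
        (∑ s : σ, (P {ω | S ω = s}).toReal *
          max 0 ((P ({ω | Y1 ω = true} ∩ {ω | S ω = s})).toReal / (P {ω | S ω = s}).toReal
            - (P ({ω | Y0 ω = true} ∩ {ω | S ω = s})).toReal / (P {ω | S ω = s}).toReal))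
          / (P {ω | Y1 ω = true}).toReal := by
  have hstratum : ∀ s : σ,
      (P {ω | S ω = s}).toReal *
        max 0 ((P ({ω | Y1 ω = true} ∩ {ω | S ω = s})).toReal / (P {ω | S ω = s}).toReal
          - (P ({ω | Y0 ω = true} ∩ {ω | S ω = s})).toReal / (P {ω | S ω = s}).toReal)
      ≤ P.real ({ω | Y0 ω = false} ∩ {ω | Y1 ω = true} ∩ {ω | S ω = s}) := by
    intro s
    refine (mul_max_zero_div_sub_div_le measureReal_nonneg _ _).trans
      ((max_zero_measureReal_sub_le P _ _).trans (measureReal_mono ?_))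
    rintro ω ⟨⟨hY1, hs⟩, hY0⟩
    exact ⟨⟨by simpa [hs] using hY0, hY1⟩, hs⟩
  have hbound := (Finset.sum_le_sum fun s _ => hstratum s).trans_eq
    (measureReal_eq_sum_inter_fiber hS _).symm
  exact ⟨hbound, div_le_div_of_nonneg_right hbound ENNReal.toReal_nonneg⟩

theorem covariate_lower_bound {Ω : Type*} [MeasurableSpace Ω] (P : Measure Ω)
    [IsProbabilityMeasure P] {σ : Type*} [Fintype σ] [MeasurableSpace σ]
    [MeasurableSingletonClass σ]
    (S : Ω → σ) (Y0 Y1 : Ω → Bool)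
    (hS : Measurable S) (hY0 : Measurable Y0) (hY1 : Measurable Y1)
    (hSpos : ∀ s : σ, 0 < (P {ω | S ω = s}).toReal)
    (hpos : 0 < (P {ω | Y1 ω = true}).toReal) :
    (P ({ω | Y0 ω = false} ∩ {ω | Y1 ω = true})).toReal ≥
        (∑ s : σ, (P {ω | S ω = s}).toReal *
          max 0 ((P ({ω | Y1 ω = true} ∩ {ω | S ω = s})).toReal / (P {ω | S ω = s}).toReal
            - (P ({ω | Y0 ω = true} ∩ {ω | S ω = s})).toReal / (P {ω | S ω = s}).toReal)) ∧
      (P ({ω | Y0 ω = false} ∩ {ω | Y1 ω = true})).toReal / (P {ω | Y1 ω = true}).toReal ≥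
        (∑ s : σ, (P {ω | S ω = s}).toReal *
          max 0 ((P ({ω | Y1 ω = true} ∩ {ω | S ω = s})).toReal / (P {ω | S ω = s}).toReal
            - (P ({ω | Y0 ω = true} ∩ {ω | S ω = s})).toReal / (P {ω | S ω = s}).toReal))
          / (P {ω | Y1 ω = true}).toReal :=
  covariate_lower_bound_general P S Y0 Y1 hS
end

section
/- Let S be a discrete random variable and Y0, Y1 binary random variables with P(Y1=1) > 0. Define Γ = Σ_s P(S=s)·max(0, P(Y1=1|S=s) - P(Y0=0|S=s)). Then P(Y0=0 | Y1=1) ≤ 1 - Γ/P(Y1=1). -/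
open MeasureTheory

lemma split_toReal {Ω : Type*} [MeasurableSpace Ω] (P : Measure Ω) [IsFiniteMeasure P]
    {A B : Set Ω} (hB : MeasurableSet B) :
    (P A).toReal = (P (B ∩ A)).toReal + (P (Bᶜ ∩ A)).toReal := by
  rw [Set.inter_comm B A, Set.inter_comm Bᶜ A, ← ENNReal.toReal_add (measure_ne_top _ _)
    (measure_ne_top _ _), ← Set.diff_eq, measure_inter_add_diff A hB]

lemma partition_toReal {Ω : Type*} [MeasurableSpace Ω] (P : Measure Ω) [IsFiniteMeasure P]
    {σ : Type*} [Fintype σ] [MeasurableSpace σ] [MeasurableSingletonClass σ]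
    {S : Ω → σ} (hS : Measurable S) {A : Set Ω} (hA : MeasurableSet A) :
    ∑ s : σ, (P (A ∩ S ⁻¹' {s})).toReal = (P A).toReal := by
  have h : ∑ s : σ, (P.restrict A) (S ⁻¹' {s}) = (P.restrict A) (S ⁻¹' (↑(Finset.univ : Finset σ))) :=
    sum_measure_preimage_singleton Finset.univ (fun b _ => hS (measurableSet_singleton b))
  simp only [Finset.coe_univ, Set.preimage_univ, Measure.restrict_apply_univ] at h
  have h2 : ∀ s : σ, (P.restrict A) (S ⁻¹' {s}) = P (A ∩ S ⁻¹' {s}) := fun s => by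
    rw [Measure.restrict_apply (hS (measurableSet_singleton s)), Set.inter_comm]
  simp only [h2] at h
  rw [← ENNReal.toReal_sum (fun s _ => measure_ne_top _ _), h]

theorem covariate_upper_bound {Ω : Type*} [MeasurableSpace Ω] (P : Measure Ω)
    [IsProbabilityMeasure P] {σ : Type*} [Fintype σ] [MeasurableSpace σ]
    [MeasurableSingletonClass σ]
    (S : Ω → σ) (Y0 Y1 : Ω → Bool)
    (hS : Measurable S) (hY0 : Measurable Y0) (hY1 : Measurable Y1)
    (hSpos : ∀ s : σ, 0 < (P {ω | S ω = s}).toReal)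
    (hpos : 0 < (P {ω | Y1 ω = true}).toReal) :
    (P ({ω | Y0 ω = false} ∩ {ω | Y1 ω = true})).toReal / (P {ω | Y1 ω = true}).toReal ≤
      1 - (∑ s : σ, (P {ω | S ω = s}).toReal *
          max 0 ((P ({ω | Y1 ω = true} ∩ {ω | S ω = s})).toReal / (P {ω | S ω = s}).toReal
            - (P ({ω | Y0 ω = false} ∩ {ω | S ω = s})).toReal / (P {ω | S ω = s}).toReal))
        / (P {ω | Y1 ω = true}).toReal := by
  have hY1s : {ω | Y1 ω = true} = Y1 ⁻¹' {true} := rfl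
  have hY0f : {ω | Y0 ω = false} = Y0 ⁻¹' {false} := rfl
  have hSs : ∀ s : σ, {ω | S ω = s} = S ⁻¹' {s} := fun s => rfl
  have mY1 : MeasurableSet {ω | Y1 ω = true} := hY1 (measurableSet_singleton true)
  have mY0f : MeasurableSet {ω | Y0 ω = false} := hY0 (measurableSet_singleton false)
  have mS : ∀ s : σ, MeasurableSet {ω | S ω = s} := fun s => hS (measurableSet_singleton s)
  set p := (P {ω | Y1 ω = true}).toReal with hp
  -- step 1: rewrite each summand
  have hterm : ∀ s : σ, (P {ω | S ω = s}).toReal *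
      max 0 ((P ({ω | Y1 ω = true} ∩ {ω | S ω = s})).toReal / (P {ω | S ω = s}).toReal
        - (P ({ω | Y0 ω = false} ∩ {ω | S ω = s})).toReal / (P {ω | S ω = s}).toReal) =
      max 0 ((P ({ω | Y1 ω = true} ∩ {ω | S ω = s})).toReal
        - (P ({ω | Y0 ω = false} ∩ {ω | S ω = s})).toReal) := by
    intro s
    have hm := hSpos s
    have key : ∀ x : ℝ, (P {ω | S ω = s}).toReal * (x / (P {ω | S ω = s}).toReal) = x :=
      fun x => by field_simp
    rw [div_sub_div_same, mul_max_of_nonneg _ _ hm.le, mul_zero, key]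
  -- step 2: per-s bound by P({Y0=true} ∩ {Y1=true} ∩ {S=s})
  have hbound : ∀ s : σ, max 0 ((P ({ω | Y1 ω = true} ∩ {ω | S ω = s})).toReal
      - (P ({ω | Y0 ω = false} ∩ {ω | S ω = s})).toReal) ≤
      (P (({ω | Y0 ω = false}ᶜ ∩ {ω | Y1 ω = true}) ∩ {ω | S ω = s})).toReal := by
    intro s
    have hsplit := split_toReal P (A := {ω | Y1 ω = true} ∩ {ω | S ω = s}) mY0f
    have hmono : (P ({ω | Y0 ω = false} ∩ ({ω | Y1 ω = true} ∩ {ω | S ω = s}))).toReal ≤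
        (P ({ω | Y0 ω = false} ∩ {ω | S ω = s})).toReal := by
      apply ENNReal.toReal_mono (measure_ne_top _ _)
      exact measure_mono (by intro ω ⟨h1, h2, h3⟩; exact ⟨h1, h3⟩)
    have h0 : (0:ℝ) ≤ (P (({ω | Y0 ω = false}ᶜ ∩ {ω | Y1 ω = true}) ∩ {ω | S ω = s})).toReal :=
      ENNReal.toReal_nonneg
    rw [Set.inter_assoc] at *
    apply max_le h0
    linarith
  -- step 3: sum over partition
  have hsum : ∑ s : σ, (P (({ω | Y0 ω = false}ᶜ ∩ {ω | Y1 ω = true}) ∩ {ω | S ω = s})).toReal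
      = (P ({ω | Y0 ω = false}ᶜ ∩ {ω | Y1 ω = true})).toReal := by
    simpa [hSs] using partition_toReal P hS (mY0f.compl.inter mY1)
  have hΓle : (∑ s : σ, (P {ω | S ω = s}).toReal *
      max 0 ((P ({ω | Y1 ω = true} ∩ {ω | S ω = s})).toReal / (P {ω | S ω = s}).toReal
        - (P ({ω | Y0 ω = false} ∩ {ω | S ω = s})).toReal / (P {ω | S ω = s}).toReal)) ≤
      (P ({ω | Y0 ω = false}ᶜ ∩ {ω | Y1 ω = true})).toReal := by
    rw [← hsum]
    exact Finset.sum_le_sum fun s _ => (hterm s).le.trans (hbound s)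
  have htotal := split_toReal P (A := {ω | Y1 ω = true}) mY0f
  rw [div_le_iff₀ hpos, sub_mul, one_mul, div_mul_cancel₀ _ hpos.ne']
  linarith
end

section
/- Tian–Pearl lower bound: suppose (X, Y0, Y1) are jointly distributed with X, Y0, Y1 binary, Y = Y_X is the factual outcome, Q the observational joint law of (X,Y), and P(Y1=1|X=1) well-defined with Q(X=1,Y=1) > 0. Then P(Y0=0 | X=1, Y=1) ≥ max(0, (Q(Y=1) - P(Y0=1)) / Q(X=1,Y=1)), where P(Y0=1) denotes the (experimental) marginal probability of Y0=1 assumed equal to the population value and Q(X=1,Y=1) = P(X=1, Y1=1). -/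
open MeasureTheory

theorem tian_pearl_lower {Ω : Type*} [MeasurableSpace Ω] (P : Measure Ω)
    [IsProbabilityMeasure P] (X Y0 Y1 : Ω → Bool)
    (hX : Measurable X) (hY0 : Measurable Y0) (hY1 : Measurable Y1)
    (hpos : 0 < (P ({ω | X ω = true} ∩ {ω | Y1 ω = true})).toReal) :
    (P ({ω | Y0 ω = false} ∩ ({ω | X ω = true} ∩ {ω | Y1 ω = true}))).toReal /
        (P ({ω | X ω = true} ∩ {ω | Y1 ω = true})).toReal
      ≥ max 0
        (((P {ω | (if X ω = true then Y1 ω else Y0 ω) = true}).toReal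
            - (P {ω | Y0 ω = true}).toReal) /
          (P ({ω | X ω = true} ∩ {ω | Y1 ω = true})).toReal) := by
  have mX : MeasurableSet {ω | X ω = true} := hX (measurableSet_singleton true)
  have mY1 : MeasurableSet {ω | Y1 ω = true} := hY1 (measurableSet_singleton true)
  have mY0t : MeasurableSet {ω | Y0 ω = true} := hY0 (measurableSet_singleton true)
  have mY0f : MeasurableSet {ω | Y0 ω = false} := hY0 (measurableSet_singleton false)
  set A := {ω | X ω = true} ∩ {ω | Y1 ω = true} with hA
  have mA : MeasurableSet A := mX.inter mY1
  -- decompose {Y=1}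
  have hset : {ω | (if X ω = true then Y1 ω else Y0 ω) = true}
      = A ∪ ({ω | X ω = true}ᶜ ∩ {ω | Y0 ω = true}) := by
    ext ω
    by_cases h : X ω = true <;> simp [hA, h]
  have hdisj1 : Disjoint A ({ω | X ω = true}ᶜ ∩ {ω | Y0 ω = true}) := by
    apply Set.disjoint_left.mpr
    rintro ω ⟨h1, _⟩ ⟨h2, _⟩
    exact h2 h1
  have hQ : P {ω | (if X ω = true then Y1 ω else Y0 ω) = true}
      = P A + P ({ω | X ω = true}ᶜ ∩ {ω | Y0 ω = true}) := by
    rw [hset, measure_union hdisj1 (mX.compl.inter mY0t)]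
  -- decompose A
  have hAset : A = ({ω | Y0 ω = false} ∩ A) ∪ ({ω | Y0 ω = true} ∩ A) := by
    ext ω
    constructor
    · intro h
      rcases Bool.eq_false_or_eq_true (Y0 ω) with h0 | h0
      · exact Or.inr ⟨h0, h⟩
      · exact Or.inl ⟨h0, h⟩
    · rintro (⟨_, h⟩ | ⟨_, h⟩) <;> exact h
  have hdisj2 : Disjoint ({ω | Y0 ω = false} ∩ A) ({ω | Y0 ω = true} ∩ A) := by
    apply Set.disjoint_left.mpr
    rintro ω ⟨h1, _⟩ ⟨h2, _⟩
    simp only [Set.mem_setOf_eq] at h1 h2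
    rw [h1] at h2; exact Bool.false_ne_true h2
  have hAmeas : P A = P ({ω | Y0 ω = false} ∩ A) + P ({ω | Y0 ω = true} ∩ A) := by
    conv_lhs => rw [hAset]
    exact measure_union hdisj2 (mY0t.inter mA)
  -- lower bound on P(Y0=1)
  have hdisj3 : Disjoint ({ω | Y0 ω = true} ∩ A) ({ω | X ω = true}ᶜ ∩ {ω | Y0 ω = true}) := by
    apply Set.disjoint_left.mpr
    rintro ω ⟨_, hx, _⟩ ⟨h2, _⟩
    exact h2 hx
  have hsub : ({ω | Y0 ω = true} ∩ A) ∪ ({ω | X ω = true}ᶜ ∩ {ω | Y0 ω = true})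
      ⊆ {ω | Y0 ω = true} := by
    rintro ω (⟨h, _⟩ | ⟨_, h⟩) <;> exact h
  have hY0ge : P ({ω | Y0 ω = true} ∩ A) + P ({ω | X ω = true}ᶜ ∩ {ω | Y0 ω = true})
      ≤ P {ω | Y0 ω = true} := by
    rw [← measure_union hdisj3 (mX.compl.inter mY0t)]
    exact measure_mono hsub
  -- convert to reals
  have fin : ∀ s : Set Ω, P s ≠ ⊤ := fun s => measure_ne_top P s
  have key : (P {ω | (if X ω = true then Y1 ω else Y0 ω) = true}).toReal
      - (P {ω | Y0 ω = true}).toReal ≤ (P ({ω | Y0 ω = false} ∩ A)).toReal := by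
    have h1 := ENNReal.toReal_mono (fin _) hY0ge
    rw [ENNReal.toReal_add (fin _) (fin _)] at h1
    rw [hQ, ENNReal.toReal_add (fin _) (fin _), hAmeas,
      ENNReal.toReal_add (fin _) (fin _)]
    linarith
  rw [ge_iff_le, max_le_iff]
  constructor
  · exact div_nonneg ENNReal.toReal_nonneg ENNReal.toReal_nonneg
  · gcongr
end

section
/- Tian–Pearl upper bound: with the setup above, P(Y0=0 | X=1, Y=1) ≤ min(1, (P(Y0=0) - Q(X=0,Y=0)) / Q(X=1,Y=1)), where Q(X=0,Y=0) = P(X=0, Y0=0) and Q(X=1,Y=1) = P(X=1, Y1=1) > 0. -/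
open MeasureTheory

theorem tian_pearl_upper {Ω : Type*} [MeasurableSpace Ω] (P : Measure Ω)
    [IsProbabilityMeasure P] (X Y0 Y1 : Ω → Bool)
    (hX : Measurable X) (hY0 : Measurable Y0) (hY1 : Measurable Y1)
    (hpos : 0 < (P ({ω | X ω = true} ∩ {ω | Y1 ω = true})).toReal) :
    (P ({ω | Y0 ω = false} ∩ ({ω | X ω = true} ∩ {ω | Y1 ω = true}))).toReal /
        (P ({ω | X ω = true} ∩ {ω | Y1 ω = true})).toReal
      ≤ min 1
        (((P {ω | Y0 ω = false}).toReal
            - (P ({ω | X ω = false} ∩ {ω | Y0 ω = false})).toReal) /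
          (P ({ω | X ω = true} ∩ {ω | Y1 ω = true})).toReal) := by
  have hmX : MeasurableSet {ω | X ω = true} := hX (measurableSet_singleton true)
  have key : P ({ω | Y0 ω = false} ∩ {ω | X ω = true}) +
      P ({ω | X ω = false} ∩ {ω | Y0 ω = false}) = P {ω | Y0 ω = false} := by
    have h := measure_inter_add_diff {ω | Y0 ω = false} hmX (μ := P)
    have : {ω | Y0 ω = false} \ {ω | X ω = true} =
        {ω | X ω = false} ∩ {ω | Y0 ω = false} := by
      ext ω; simp [Set.mem_diff, and_comm, Bool.not_eq_true]
    rwa [this] at h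
  have hfin : ∀ s : Set Ω, P s ≠ ⊤ := fun s => measure_ne_top P s
  have keyR : (P ({ω | Y0 ω = false} ∩ {ω | X ω = true})).toReal +
      (P ({ω | X ω = false} ∩ {ω | Y0 ω = false})).toReal
      = (P {ω | Y0 ω = false}).toReal := by
    rw [← ENNReal.toReal_add (hfin _) (hfin _), key]
  have hsub : (P ({ω | Y0 ω = false} ∩ ({ω | X ω = true} ∩ {ω | Y1 ω = true}))).toReal
      ≤ (P {ω | Y0 ω = false}).toReal
          - (P ({ω | X ω = false} ∩ {ω | Y0 ω = false})).toReal := by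
    have h1 : (P ({ω | Y0 ω = false} ∩ ({ω | X ω = true} ∩ {ω | Y1 ω = true}))).toReal
        ≤ (P ({ω | Y0 ω = false} ∩ {ω | X ω = true})).toReal := by
      refine ENNReal.toReal_mono (hfin _) (measure_mono ?_)
      intro ω hω; exact ⟨hω.1, hω.2.1⟩
    linarith
  refine le_min ?_ ?_
  · rw [div_le_one hpos]
    exact ENNReal.toReal_mono (hfin _) (measure_mono Set.inter_subset_right)
  · exact div_le_div_of_nonneg_right hsub hpos.le
end

section
/- If the Tian–Pearl bounds coincide at 1, i.e. Q(Y=1) - P(Y0=1) = Q(X=1,Y=1), then P(Y0=0 | X=1, Y=1) = 1 exactly. -/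
open MeasureTheory

theorem tian_pearl_bounds_coincide {Ω : Type*} [MeasurableSpace Ω] (P : Measure Ω)
    [IsProbabilityMeasure P] (X Y0 Y1 : Ω → Bool)
    (hX : Measurable X) (hY0 : Measurable Y0) (hY1 : Measurable Y1)
    (hpos : 0 < (P ({ω | X ω = true} ∩ {ω | Y1 ω = true})).toReal)
    (hcoincide : (P {ω | (if X ω = true then Y1 ω else Y0 ω) = true}).toReal
        - (P {ω | Y0 ω = true}).toReal
      = (P ({ω | X ω = true} ∩ {ω | Y1 ω = true})).toReal) :
    (P ({ω | Y0 ω = false} ∩ ({ω | X ω = true} ∩ {ω | Y1 ω = true}))).toReal /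
        (P ({ω | X ω = true} ∩ {ω | Y1 ω = true})).toReal = 1 := by
  have mX : MeasurableSet {ω | X ω = true} := hX (measurableSet_singleton true)
  have mY0 : MeasurableSet {ω | Y0 ω = true} := hY0 (measurableSet_singleton true)
  have mY1 : MeasurableSet {ω | Y1 ω = true} := hY1 (measurableSet_singleton true)
  set A := {ω | X ω = true} ∩ {ω | Y1 ω = true} with hA
  have hYset : {ω | (if X ω = true then Y1 ω else Y0 ω) = true}
      = A ∪ ({ω | X ω = true}ᶜ ∩ {ω | Y0 ω = true}) := by
    ext ω
    by_cases h : X ω = true <;>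
      simp [hA, Set.mem_setOf_eq, Set.mem_inter_iff, h]
  have hdisj : Disjoint A ({ω | X ω = true}ᶜ ∩ {ω | Y0 ω = true}) := by
    apply Set.disjoint_left.2
    rintro ω ⟨hx, _⟩ ⟨hx', _⟩
    exact hx' hx
  have hY0set : {ω | Y0 ω = true}
      = ({ω | X ω = true} ∩ {ω | Y0 ω = true}) ∪ ({ω | X ω = true}ᶜ ∩ {ω | Y0 ω = true}) := by
    rw [← Set.union_inter_distrib_right, Set.union_compl_self, Set.univ_inter]
  have hdisj2 : Disjoint ({ω | X ω = true} ∩ {ω | Y0 ω = true})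
      ({ω | X ω = true}ᶜ ∩ {ω | Y0 ω = true}) := by
    apply Set.disjoint_left.2
    rintro ω ⟨hx, _⟩ ⟨hx', _⟩
    exact hx' hx
  have hmu1 : P {ω | (if X ω = true then Y1 ω else Y0 ω) = true}
      = P A + P ({ω | X ω = true}ᶜ ∩ {ω | Y0 ω = true}) := by
    rw [hYset, measure_union hdisj (mX.compl.inter mY0)]
  have hmu2 : P {ω | Y0 ω = true}
      = P ({ω | X ω = true} ∩ {ω | Y0 ω = true}) + P ({ω | X ω = true}ᶜ ∩ {ω | Y0 ω = true}) := by
    have h := measure_union (μ := P) hdisj2 (mX.compl.inter mY0)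
    rw [← hY0set] at h
    exact h
  have hc0 : P ({ω | X ω = true} ∩ {ω | Y0 ω = true}) = 0 := by
    have h1 := hcoincide
    rw [hmu1, hmu2, ENNReal.toReal_add (measure_ne_top P _) (measure_ne_top P _),
      ENNReal.toReal_add (measure_ne_top P _) (measure_ne_top P _)] at h1
    have h2 : (P ({ω | X ω = true} ∩ {ω | Y0 ω = true})).toReal = 0 := by linarith
    exact (ENNReal.toReal_eq_zero_iff _).1 h2 |>.resolve_right (measure_ne_top P _)
  have hkey : P ({ω | Y0 ω = false} ∩ A) = P A := by
    refine le_antisymm (measure_mono Set.inter_subset_right) ?_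
    calc P A ≤ P (({ω | Y0 ω = false} ∩ A) ∪ ({ω | X ω = true} ∩ {ω | Y0 ω = true})) := by
          apply measure_mono
          intro ω hω
          rcases Bool.eq_false_or_eq_true (Y0 ω) with h | h
          · exact Or.inr ⟨hω.1, h⟩
          · exact Or.inl ⟨h, hω⟩
      _ ≤ P ({ω | Y0 ω = false} ∩ A) + P ({ω | X ω = true} ∩ {ω | Y0 ω = true}) :=
          measure_union_le _ _
      _ = P ({ω | Y0 ω = false} ∩ A) := by rw [hc0, add_zero]
  rw [hkey]
  exact div_self (ne_of_gt hpos)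
end

section
/- In the mediation model with no direct effect and (M(0),M(1)) ⫫ (Y(0),Y(1)): AB = y*_{+1} - y*_{1+}, i.e. (y_{+0} - y_{0+})·(m_{+0} - m_{0+}) = P(Y*(1)=1) - P(Y*(0)=1). -/
open MeasureTheory ProbabilityTheory

lemma if_event_prob {Ω : Type*} [MeasurableSpace Ω] (P : Measure Ω)
    [IsProbabilityMeasure P] (M Y0 Y1 : Ω → Bool)
    (hM : Measurable M) (hY0 : Measurable Y0) (hY1 : Measurable Y1)
    (h1 : IndepFun M Y1 P) (h0 : IndepFun M Y0 P) :
    (P {ω | (if M ω = true then Y1 ω else Y0 ω) = true}).toReal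
      = (P (M ⁻¹' {true})).toReal * (P (Y1 ⁻¹' {true})).toReal
        + (1 - (P (M ⁻¹' {true})).toReal) * (P (Y0 ⁻¹' {true})).toReal := by
  have hset : {ω | (if M ω = true then Y1 ω else Y0 ω) = true}
      = (M ⁻¹' {true} ∩ Y1 ⁻¹' {true}) ∪ ((M ⁻¹' {true})ᶜ ∩ Y0 ⁻¹' {true}) := by
    ext ω
    cases h : M ω <;> simp [h]
  have hdisj : Disjoint (M ⁻¹' {true} ∩ Y1 ⁻¹' {true}) ((M ⁻¹' {true})ᶜ ∩ Y0 ⁻¹' {true}) := by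
    refine Set.disjoint_left.2 fun ω hω hω' => ?_
    exact hω'.1 hω.1
  have hmeas2 : MeasurableSet ((M ⁻¹' {true})ᶜ ∩ Y0 ⁻¹' {true}) :=
    ((hM (MeasurableSet.singleton true)).compl).inter (hY0 (MeasurableSet.singleton true))
  have hcompl : (M ⁻¹' {true})ᶜ = M ⁻¹' {false} := by
    ext ω; cases h : M ω <;> simp [h]
  have hp1 : P (M ⁻¹' {true} ∩ Y1 ⁻¹' {true}) = P (M ⁻¹' {true}) * P (Y1 ⁻¹' {true}) :=
    h1.measure_inter_preimage_eq_mul _ _ (MeasurableSet.singleton true)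
      (MeasurableSet.singleton true)
  have hp0 : P ((M ⁻¹' {true})ᶜ ∩ Y0 ⁻¹' {true}) = P ((M ⁻¹' {true})ᶜ) * P (Y0 ⁻¹' {true}) := by
    rw [hcompl]
    exact h0.measure_inter_preimage_eq_mul _ _ (MeasurableSet.singleton false)
      (MeasurableSet.singleton true)
  have hc : (P ((M ⁻¹' {true})ᶜ)).toReal = 1 - (P (M ⁻¹' {true})).toReal := by
    rw [prob_compl_eq_one_sub (hM (MeasurableSet.singleton true))]
    rw [ENNReal.toReal_sub_of_le prob_le_one ENNReal.one_ne_top]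
    simp
  rw [hset, measure_union hdisj hmeas2, ENNReal.toReal_add (measure_ne_top _ _) (measure_ne_top _ _),
    hp1, hp0, ENNReal.toReal_mul, ENNReal.toReal_mul, hc]

theorem mediation_AB_identity {Ω : Type*} [MeasurableSpace Ω] (P : Measure Ω)
    [IsProbabilityMeasure P] (M0 M1 Y0 Y1 : Ω → Bool)
    (hM0 : Measurable M0) (hM1 : Measurable M1)
    (hY0 : Measurable Y0) (hY1 : Measurable Y1)
    (hindep : IndepFun (fun ω => (M0 ω, M1 ω)) (fun ω => (Y0 ω, Y1 ω)) P) :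
    ((P {ω | Y1 ω = false}).toReal - (P {ω | Y0 ω = false}).toReal) *
        ((P {ω | M1 ω = false}).toReal - (P {ω | M0 ω = false}).toReal)
      = (P {ω | (if M1 ω = true then Y1 ω else Y0 ω) = true}).toReal
        - (P {ω | (if M0 ω = true then Y1 ω else Y0 ω) = true}).toReal := by
  have h11 : IndepFun M1 Y1 P := hindep.comp measurable_snd measurable_snd
  have h10 : IndepFun M1 Y0 P := hindep.comp measurable_snd measurable_fst
  have h01 : IndepFun M0 Y1 P := hindep.comp measurable_fst measurable_snd
  have h00 : IndepFun M0 Y0 P := hindep.comp measurable_fst measurable_fst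
  have e1 := if_event_prob P M1 Y0 Y1 hM1 hY0 hY1 h11 h10
  have e0 := if_event_prob P M0 Y0 Y1 hM0 hY0 hY1 h01 h00
  have hfalse : ∀ (f : Ω → Bool), Measurable f →
      (P {ω | f ω = false}).toReal = 1 - (P (f ⁻¹' {true})).toReal := by
    intro f hf
    have : {ω | f ω = false} = (f ⁻¹' {true})ᶜ := by
      ext ω; cases h : f ω <;> simp [h]
    rw [this, prob_compl_eq_one_sub (hf (MeasurableSet.singleton true)),
      ENNReal.toReal_sub_of_le prob_le_one ENNReal.one_ne_top]
    simp
  rw [hfalse Y1 hY1, hfalse Y0 hY0, hfalse M1 hM1, hfalse M0 hM0, e1, e0]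
  ring
end

section
/- Mediation upper bound (one cell of Table 3): in the no-direct-effect mediation model with (M(0),M(1)) ⫫ (Y(0),Y(1)), if m_{1+} + m_{+1} ≥ 1 and y_{1+} + y_{+1} ≥ 1, then y*_{01} = m01·y01 + m10·y10 ≤ m_{0+}·y_{0+} + m_{+0}·y_{+0}. -/
theorem mediation_upper_bound_cell
    (m00 m01 m10 m11 y00 y01 y10 y11 : ℝ)
    (hm0 : 0 ≤ m00) (hm1 : 0 ≤ m01) (hm2 : 0 ≤ m10) (hm3 : 0 ≤ m11)
    (hmsum : m00 + m01 + m10 + m11 = 1)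
    (hy0 : 0 ≤ y00) (hy1 : 0 ≤ y01) (hy2 : 0 ≤ y10) (hy3 : 0 ≤ y11)
    (hysum : y00 + y01 + y10 + y11 = 1)
    (hmcond : (m10 + m11) + (m01 + m11) ≥ 1)
    (hycond : (y10 + y11) + (y01 + y11) ≥ 1) :
    m01 * y01 + m10 * y10
      ≤ (m00 + m01) * (y00 + y01) + (m00 + m10) * (y00 + y10) := by
  nlinarith [mul_nonneg hm0 hy0, mul_nonneg hm1 hy1, mul_nonneg hm2 hy2, mul_nonneg hm0 hy1, mul_nonneg hm0 hy2, mul_nonneg hm1 hy0, mul_nonneg hm2 hy0, mul_nonneg hm1 hy2, mul_nonneg hm2 hy1, sq_nonneg (m01 - m10 + y01 - y10), sq_nonneg (m01 - m10 - y01 + y10)]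
end
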